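/- Let (L, Δ) be an objective partial group with Δ a set of subgroups of S ∈ Δ, and let w = (g₁,…,gₙ) ∈ W(L). Define S_w as the set of x ∈ S such that for each k ≤ n the composite conjugation c_{g₁}∘⋯∘c_{g_k} is defined at x and maps x into S. Then S_w is a subgroup of S, and S_w ∈ Δ if and only if w ∈ D. -/

import Mathlib

universe u

structure PartialGroupOn (L : Type u) : Type u where
  nonempty : Nonempty L
  D : Set (List L)
  Pi : List L → L
  inv : L → L
  mem_single : ∀ x : L, [x] ∈ D
  mem_append_left : ∀ u v : List L, u ++ v ∈ D → u ∈ D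
  mem_append_right : ∀ u v : List L, u ++ v ∈ D → v ∈ D
  Pi_single : ∀ x : L, Pi [x] = x
  mem_assoc : ∀ u v w : List L, u ++ v ++ w ∈ D → u ++ [Pi v] ++ w ∈ D
  Pi_assoc : ∀ u v w : List L, u ++ v ++ w ∈ D →
    Pi (u ++ v ++ w) = Pi (u ++ [Pi v] ++ w)
  inv_inv : ∀ x : L, inv (inv x) = x
  mem_inv : ∀ w ∈ D, (w.reverse.map inv) ++ w ∈ D
  Pi_inv : ∀ w ∈ D, Pi ((w.reverse.map inv) ++ w) = Pi []

namespace PartialGroupOn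

variable {L : Type u} (M : PartialGroupOn L)

/-- The inverse of a word: reverse the word and invert each entry. -/
def wordInv (w : List L) : List L := w.reverse.map M.inv

/-- The identity element `1 = Π(∅)`. -/
def one : L := M.Pi []

/-- Conjugation `x ↦ x^g = Π(g⁻¹, x, g)`. -/
def conj (x g : L) : L := M.Pi [M.inv g, x, g]

/-- `D(g)` is the set of `x` for which `x^g` is defined. -/
def Dg (g : L) : Set L := {x | [M.inv g, x, g] ∈ M.D}

/-- A partial subgroup: a nonempty subset closed under inversion and under the
product applied to words in `D` with entries in the subset. -/
def IsPartialSubgroup (H : Set L) : Prop :=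
  H.Nonempty ∧ (∀ x ∈ H, M.inv x ∈ H) ∧
    ∀ w : List L, (∀ x ∈ w, x ∈ H) → w ∈ M.D → M.Pi w ∈ H

/-- A partial normal subgroup of `L`. -/
def IsPartialNormal (N : Set L) : Prop :=
  M.IsPartialSubgroup N ∧
    ∀ x ∈ N, ∀ g : L, [M.inv g, x, g] ∈ M.D → M.conj x g ∈ N

/-- A subgroup of `L`: a partial subgroup `H` with `W(H) ⊆ D`. -/
def IsSubgroup (H : Set L) : Prop :=
  M.IsPartialSubgroup H ∧ ∀ w : List L, (∀ x ∈ w, x ∈ H) → w ∈ M.D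

/-- `X ⊆ D(g)`, i.e. `X^g` is defined. -/
def setConjDef (X : Set L) (g : L) : Prop := ∀ x ∈ X, [M.inv g, x, g] ∈ M.D

/-- The conjugate set `X^g`. -/
def setConj (X : Set L) (g : L) : Set L := {y | ∃ x ∈ X, y = M.conj x g}

/-- `viaChain Δ w X` says that `w = (g₁,…,gₙ)` is in `D` via the chain
`X = X₀, X₁ = X₀^{g₁}, …` of members of `Δ`. -/
def viaChain (Δ : Set (Set L)) : List L → Set L → Prop
  | [], X => X ∈ Δ
  | g :: w, X => X ∈ Δ ∧ M.setConjDef X g ∧ viaChain Δ w (M.setConj X g)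

/-- `(L, Δ)` is an objective partial group: every member of `Δ` is a subgroup,
(O1) `D = D_Δ`, and (O2) the overgroup-closure condition. -/
def Objective (Δ : Set (Set L)) : Prop :=
  (∀ X ∈ Δ, M.IsSubgroup X) ∧
  (M.D = {w | ∃ X : Set L, M.viaChain Δ w X}) ∧
  (∀ X ∈ Δ, ∀ Y ∈ Δ, ∀ g : L, M.setConjDef X g → M.IsSubgroup (M.setConj X g) →
    M.setConj X g ⊆ Y →
    ∀ Z : Set L, M.IsSubgroup Z → M.setConj X g ⊆ Z → Z ⊆ Y → Z ∈ Δ)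

/-- The normalizer `N_L(X) = {g : X^g = X}`. -/
def normalizer (X : Set L) : Set L := {g | M.setConjDef X g ∧ M.setConj X g = X}

/-- `S_g = {x ∈ D(g) ∩ S : x^g ∈ S}`. -/
def Sg (S : Set L) (g : L) : Set L :=
  {x | x ∈ S ∧ [M.inv g, x, g] ∈ M.D ∧ M.conj x g ∈ S}

/-- `S_w`: the set of `x ∈ S` successively conjugated into `S` by the entries
of the word `w`. -/
def Sw (S : Set L) : List L → Set L
  | [] => S
  | g :: w => {x | x ∈ S ∧ [M.inv g, x, g] ∈ M.D ∧ M.conj x g ∈ Sw S w}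

/-- A `p`-subgroup: a subgroup whose cardinality is a power of `p`. -/
def IsPSubgroup (p : ℕ) (H : Set L) : Prop :=
  M.IsSubgroup H ∧ ∃ n : ℕ, Nat.card H = p ^ n

/-- `(L, Δ, S)` is a locality. -/
def IsLocality (p : ℕ) (Δ : Set (Set L)) (S : Set L) : Prop :=
  p.Prime ∧ Finite L ∧ S ∈ Δ ∧ (∀ X ∈ Δ, X ⊆ S) ∧ M.Objective Δ ∧
    M.IsPSubgroup p S ∧
    ∀ H : Set L, M.IsPSubgroup p H → S ⊆ H → H = S

/-- The product set `XY` of two subsets of `L`. -/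
def setProd (X Y : Set L) : Set L :=
  {z | ∃ a ∈ X, ∃ b ∈ Y, [a, b] ∈ M.D ∧ z = M.Pi [a, b]}

/-- A homomorphism of partial groups. -/
def IsHom {L' : Type u} (M' : PartialGroupOn L') (β : L → L') : Prop :=
  (∀ w ∈ M.D, w.map β ∈ M'.D) ∧ ∀ w ∈ M.D, β (M.Pi w) = M'.Pi (w.map β)

end PartialGroupOn

open PartialGroupOn

variable {L : Type u}

/-!
Everything rests on conjugation by `g` being multiplicative on `S_g`. For `x, y ∈ S_g` with
`a = x^g`, `b = y^g`, the word `V = (x, y, g, b⁻¹, a⁻¹)` lies in `D`: words of `S` can be attached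
at either end of `(y, g) ∈ D`, because a `Δ`-chain runs on through `S` (conjugation by elements of
`S` preserves `Δ`, by (O2)). Moreover `Π V = g`, since `y g = g b` and `x g = g a`. Hence
`V⁻¹ ∘ (Π V) = (a, b, g⁻¹, y⁻¹, x⁻¹, g)` lies in `D` with product `1`, so `(xy)^g` is defined and
equals `ab`.

It follows that each `S_w` is a subgroup and, by (O2), that a conjugate `X^g ⊆ S` of a member `X`
of `Δ` is again in `Δ`; so every member of `Δ` contained in `S_w` starts a `Δ`-chain for `w`.
Conversely the first term of a `Δ`-chain for `w` lies in `S_w`, and (O2) with `g = 1` puts every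
subgroup of `S` containing a member of `Δ` into `Δ`.
-/

namespace PartialGroupOn

section PartialGroup

variable (M : PartialGroupOn L)

lemma nil_mem : ([] : List L) ∈ M.D := by
  obtain ⟨x⟩ := M.nonempty
  exact M.mem_append_left [] [x] (M.mem_single x)

lemma Pi_inv_mul (x : L) : M.Pi [M.inv x, x] = M.one :=
  M.Pi_inv [x] (M.mem_single x)

lemma Pi_mul_inv (x : L) : M.Pi [x, M.inv x] = M.one := by
  simpa only [M.inv_inv] using M.Pi_inv_mul (M.inv x)

lemma mul_one_mem (x : L) : [x, M.one] ∈ M.D :=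
  M.mem_assoc [x] [] [] (M.mem_single x)

lemma Pi_mul_one (x : L) : M.Pi [x, M.one] = x :=
  (M.Pi_assoc [x] [] [] (M.mem_single x)).symm.trans (M.Pi_single x)

lemma inv_one : M.inv M.one = M.one :=
  (M.Pi_mul_one _).symm.trans (M.Pi_inv_mul M.one)

@[simp]
lemma wordInv_wordInv (w : List L) : M.wordInv (M.wordInv w) = w := by
  simp [wordInv, List.map_reverse, Function.comp_def, M.inv_inv]

lemma wordInv_append (u v : List L) : M.wordInv (u ++ v) = M.wordInv v ++ M.wordInv u := by
  simp [wordInv]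

variable {M}

lemma one_cons_mem {v : List L} (hv : v ∈ M.D) : M.one :: v ∈ M.D :=
  M.mem_assoc [] [] v hv

lemma Pi_one_cons {v : List L} (hv : v ∈ M.D) : M.Pi (M.one :: v) = M.Pi v :=
  (M.Pi_assoc [] [] v hv).symm

lemma Pi_cons {z : L} {v : List L} (h : z :: v ∈ M.D) : M.Pi (z :: v) = M.Pi [z, M.Pi v] := by
  simpa using M.Pi_assoc [z] v [] (by simpa using h)

lemma pair_Pi_mem {u v : List L} (h : u ++ v ∈ M.D) : [M.Pi u, M.Pi v] ∈ M.D := by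
  have h' : M.Pi u :: v ∈ M.D := M.mem_assoc [] u v h
  simpa using M.mem_assoc [M.Pi u] v [] (by simpa using h')

lemma Pi_append {u v : List L} (h : u ++ v ∈ M.D) : M.Pi (u ++ v) = M.Pi [M.Pi u, M.Pi v] := by
  have h' : M.Pi u :: v ∈ M.D := M.mem_assoc [] u v h
  rw [show u ++ v = [] ++ u ++ v by simp, M.Pi_assoc [] u v (by simpa using h)]
  simpa using M.Pi_assoc [M.Pi u] v [] (by simpa using h')

lemma Pi_append_congr {u v v' w : List L} (h : u ++ v ++ w ∈ M.D) (h' : u ++ v' ++ w ∈ M.D)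
    (hv : M.Pi v = M.Pi v') : M.Pi (u ++ v ++ w) = M.Pi (u ++ v' ++ w) := by
  rw [M.Pi_assoc u v w h, M.Pi_assoc u v' w h', hv]

lemma inv_cons_cons_mem {p : L} {v : List L} (h : p :: v ∈ M.D) : M.inv p :: p :: v ∈ M.D := by
  have := M.mem_inv _ h
  rw [List.reverse_cons, List.map_append, List.append_assoc] at this
  exact M.mem_append_right _ _ this

lemma Pi_inv_cons_cons {p : L} {v : List L} (h : p :: v ∈ M.D) :
    M.Pi (M.inv p :: p :: v) = M.Pi v := by
  calc M.Pi (M.inv p :: p :: v) = M.Pi (M.Pi [M.inv p, p] :: v) :=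
        M.Pi_assoc [] [M.inv p, p] v (inv_cons_cons_mem h)
    _ = M.Pi v := by rw [Pi_inv_mul, Pi_one_cons (M.mem_append_right [p] v h)]

lemma eq_inv_of_Pi_pair_eq_one {p q : L} (h : [p, q] ∈ M.D) (h1 : M.Pi [p, q] = M.one) :
    q = M.inv p :=
  calc q = M.Pi [M.inv p, p, q] := ((Pi_inv_cons_cons h).trans (M.Pi_single q)).symm
    _ = M.Pi [M.inv p, M.Pi [p, q]] := M.Pi_assoc [M.inv p] [p, q] [] (inv_cons_cons_mem h)
    _ = M.inv p := by rw [h1, Pi_mul_one]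

lemma wordInv_mem {w : List L} (h : w ∈ M.D) : M.wordInv w ∈ M.D :=
  M.mem_append_left _ w (M.mem_inv w h)

lemma Pi_append_wordInv {w : List L} (h : w ∈ M.D) : M.Pi (w ++ M.wordInv w) = M.one := by
  have : M.Pi (M.wordInv (M.wordInv w) ++ M.wordInv w) = M.one := M.Pi_inv _ (wordInv_mem h)
  rwa [wordInv_wordInv] at this

lemma wordInv_append_Pi_mem {w : List L} (h : w ∈ M.D) : M.wordInv w ++ [M.Pi w] ∈ M.D := by
  simpa using M.mem_assoc (M.wordInv w) w [] (by rw [List.append_nil]; exact M.mem_inv w h)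

lemma Pi_wordInv_append_Pi {w : List L} (h : w ∈ M.D) :
    M.Pi (M.wordInv w ++ [M.Pi w]) = M.one := by
  have := M.Pi_assoc (M.wordInv w) w [] (by rw [List.append_nil]; exact M.mem_inv w h)
  simp only [List.append_nil] at this
  rw [← this]
  exact M.Pi_inv w h

lemma Pi_wordInv {w : List L} (h : w ∈ M.D) : M.Pi (M.wordInv w) = M.inv (M.Pi w) := by
  have h' := wordInv_append_Pi_mem h
  have := eq_inv_of_Pi_pair_eq_one (pair_Pi_mem h')
    (by rw [← Pi_append h']; exact Pi_wordInv_append_Pi h)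
  rw [M.Pi_single] at this
  rw [this, M.inv_inv]

lemma pair_conj_mem {g z : L} (h : [M.inv g, z, g] ∈ M.D) : [g, M.conj z g] ∈ M.D := by
  have h4 : [g, M.inv g, z, g] ∈ M.D := by simpa only [M.inv_inv] using inv_cons_cons_mem h
  exact M.mem_assoc [g] [M.inv g, z, g] [] h4

lemma Pi_pair_conj {g z : L} (h : [M.inv g, z, g] ∈ M.D) : M.Pi [z, g] = M.Pi [g, M.conj z g] := by
  have h4 : [g, M.inv g, z, g] ∈ M.D := by simpa only [M.inv_inv] using inv_cons_cons_mem h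
  calc M.Pi [z, g] = M.Pi [g, M.inv g, z, g] := by
        simpa only [M.inv_inv] using (Pi_inv_cons_cons h).symm
    _ = M.Pi [g, M.conj z g] := M.Pi_assoc [g] [M.inv g, z, g] [] h4

lemma wordInv_conj_word (g z : L) : M.wordInv [M.inv g, z, g] = [M.inv g, M.inv z, g] := by
  simp [wordInv, M.inv_inv]

lemma conj_inv_mem {g z : L} (h : [M.inv g, z, g] ∈ M.D) : [M.inv g, M.inv z, g] ∈ M.D :=
  M.wordInv_conj_word g z ▸ wordInv_mem h

lemma conj_inv {g z : L} (h : [M.inv g, z, g] ∈ M.D) :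
    M.conj (M.inv z) g = M.inv (M.conj z g) := by
  unfold conj
  rw [← wordInv_conj_word, Pi_wordInv h]

lemma conj_Pi_pair_of_Pi_eq {g x y a b : L} (hV : [x, y, g, M.inv b, M.inv a] ∈ M.D)
    (hPi : M.Pi [x, y, g, M.inv b, M.inv a] = g) :
    [M.inv g, M.Pi [x, y], g] ∈ M.D ∧ M.conj (M.Pi [x, y]) g = M.Pi [a, b] := by
  set u := M.Pi [x, y]
  have hK : [a, b] ++ [M.inv g, M.inv y, M.inv x, g] ∈ M.D := by
    have := wordInv_append_Pi_mem hV
    rw [hPi] at this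
    simpa [wordInv, M.inv_inv] using this
  have hK1 : M.Pi ([a, b] ++ [M.inv g, M.inv y, M.inv x, g]) = M.one := by
    have := Pi_wordInv_append_Pi hV
    rw [hPi] at this
    simpa [wordInv, M.inv_inv] using this
  have hmid : [M.inv g] ++ [M.inv y, M.inv x] ++ [g] ∈ M.D := M.mem_append_right [a, b] _ hK
  have hu : M.Pi [M.inv y, M.inv x] = M.inv u :=
    Pi_wordInv (w := [x, y]) (M.mem_append_left [x, y] _ hV)
  have hc : M.Pi [M.inv g, M.inv y, M.inv x, g] = M.conj (M.inv u) g :=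
    (M.Pi_assoc [M.inv g] [M.inv y, M.inv x] [g] hmid).trans (by rw [hu]; rfl)
  have hinv_mem : [M.inv g, M.inv u, g] ∈ M.D := hu ▸ M.mem_assoc _ _ _ hmid
  have hinv_conj : M.conj (M.inv u) g = M.inv (M.Pi [a, b]) := by
    have hpair := pair_Pi_mem hK
    rw [hc] at hpair
    exact eq_inv_of_Pi_pair_eq_one hpair (by rw [← hc, ← Pi_append hK, hK1])
  have hmem := conj_inv_mem hinv_mem
  have hval := conj_inv hinv_mem
  rw [M.inv_inv] at hmem hval
  exact ⟨hmem, by rw [hval, hinv_conj, M.inv_inv]⟩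

variable (M)

lemma one_conj_mem (g : L) : [M.inv g, M.one, g] ∈ M.D :=
  M.mem_assoc [M.inv g] [] [g] (inv_cons_cons_mem (M.mem_single g))

lemma one_conj (g : L) : M.conj M.one g = M.one :=
  (M.Pi_assoc [M.inv g] [] [g] (inv_cons_cons_mem (M.mem_single g))).symm.trans (M.Pi_inv_mul g)

lemma conj_one_mem (x : L) : [M.inv M.one, x, M.one] ∈ M.D := by
  rw [inv_one]
  exact one_cons_mem (M.mul_one_mem x)

lemma conj_one (x : L) : M.conj x M.one = x := by
  unfold conj
  rw [inv_one, Pi_one_cons (M.mul_one_mem x), Pi_mul_one]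

lemma setConj_one (X : Set L) : M.setConj X M.one = X := by
  ext x
  simp [setConj, conj_one]

end PartialGroup

section Subgroup

variable {M : PartialGroupOn L} {H S : Set L}

lemma IsSubgroup.one_mem (hH : M.IsSubgroup H) : M.one ∈ H :=
  hH.1.2.2 [] (by simp) M.nil_mem

lemma IsSubgroup.inv_mem (hH : M.IsSubgroup H) {x : L} (hx : x ∈ H) : M.inv x ∈ H :=
  hH.1.2.1 x hx

lemma IsSubgroup.Pi_mem (hH : M.IsSubgroup H) {w : List L} (hw : ∀ x ∈ w, x ∈ H) : M.Pi w ∈ H :=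
  hH.1.2.2 w hw (hH.2 w hw)

lemma IsSubgroup.of_subset (hS : M.IsSubgroup S) (hHS : H ⊆ S) (one_mem : M.one ∈ H)
    (inv_mem : ∀ x ∈ H, M.inv x ∈ H) (mul_mem : ∀ x ∈ H, ∀ y ∈ H, M.Pi [x, y] ∈ H) :
    M.IsSubgroup H := by
  have words_mem : ∀ w : List L, (∀ x ∈ w, x ∈ H) → w ∈ M.D :=
    fun w hw => hS.2 w fun x hx => hHS (hw x hx)
  have Pi_mem : ∀ w : List L, (∀ x ∈ w, x ∈ H) → M.Pi w ∈ H := by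
    intro w hw
    induction w with
    | nil => exact one_mem
    | cons z w ih =>
      rw [Pi_cons (words_mem _ hw)]
      exact mul_mem z (hw z (by simp)) _ (ih fun x hx => hw x (by simp [hx]))
  exact ⟨⟨⟨_, one_mem⟩, inv_mem, fun w hw _ => Pi_mem w hw⟩, words_mem⟩

lemma setConjDef_of_subset (hS : M.IsSubgroup S) {X : Set L} (hX : X ⊆ S) {t : L} (ht : t ∈ S) :
    M.setConjDef X t :=
  fun x hx => hS.2 _ (by simp [hX hx, ht, hS.inv_mem ht])

lemma setConj_subset (hS : M.IsSubgroup S) {X : Set L} (hX : X ⊆ S) {t : L} (ht : t ∈ S) :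
    M.setConj X t ⊆ S := by
  rintro _ ⟨x, hx, rfl⟩
  exact hS.Pi_mem (by simp [hX hx, ht, hS.inv_mem ht])

lemma conj_Pi_pair_of_isSubgroup (hS : M.IsSubgroup S) {p q t : L} (hp : p ∈ S) (hq : q ∈ S)
    (ht : t ∈ S) : M.conj (M.Pi [p, q]) t = M.Pi [M.conj p t, M.conj q t] := by
  have hti := hS.inv_mem ht
  calc M.conj (M.Pi [p, q]) t = M.Pi ([M.inv t] ++ [p, q] ++ [t]) :=
        (M.Pi_assoc [M.inv t] [p, q] [t] (hS.2 _ (by simp [*]))).symm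
    _ = M.Pi ([M.inv t, p] ++ [t, M.inv t] ++ [q, t]) :=
        Pi_append_congr (u := [M.inv t, p]) (w := [q, t]) (hS.2 _ (by simp [*]))
          (hS.2 _ (by simp [*])) (M.Pi_mul_inv t).symm
    _ = M.Pi [M.conj p t, M.conj q t] :=
        Pi_append (u := [M.inv t, p, t]) (v := [M.inv t, q, t]) (hS.2 _ (by simp [*]))

end Subgroup

section Objective

variable {M : PartialGroupOn L} {Δ : Set (Set L)} {S : Set L}

lemma mem_D_iff (hobj : M.Objective Δ) {w : List L} : w ∈ M.D ↔ ∃ X, M.viaChain Δ w X := by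
  rw [hobj.2.1]
  rfl

lemma mem_of_viaChain {w : List L} {X : Set L} (h : M.viaChain Δ w X) : X ∈ Δ := by
  cases w with
  | nil => exact h
  | cons g w => exact h.1

lemma setConj_mem_of_conj_Pi_pair (hobj : M.Objective Δ) (hS : S ∈ Δ) {Q : Set L} (hQ : Q ∈ Δ)
    {g : L} (hdef : M.setConjDef Q g) (hQS : M.setConj Q g ⊆ S)
    (hmul : ∀ p ∈ Q, ∀ q ∈ Q, M.conj (M.Pi [p, q]) g = M.Pi [M.conj p g, M.conj q g]) :
    M.setConj Q g ∈ Δ := by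
  have hQgrp := hobj.1 Q hQ
  have hgrp : M.IsSubgroup (M.setConj Q g) := by
    refine (hobj.1 S hS).of_subset hQS ⟨_, hQgrp.one_mem, (M.one_conj g).symm⟩ ?_ ?_
    · rintro _ ⟨q, hq, rfl⟩
      exact ⟨_, hQgrp.inv_mem hq, (conj_inv (hdef q hq)).symm⟩
    · rintro _ ⟨p, hp, rfl⟩ _ ⟨q, hq, rfl⟩
      exact ⟨_, hQgrp.Pi_mem (by simp [hp, hq]), (hmul p hp q hq).symm⟩
  exact hobj.2.2 Q hQ S hS g hdef hgrp hQS _ hgrp subset_rfl hQS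

lemma setConj_mem_of_mem (hobj : M.Objective Δ) (hS : S ∈ Δ) (hsub : ∀ X ∈ Δ, X ⊆ S)
    {X : Set L} (hX : X ∈ Δ) {t : L} (ht : t ∈ S) : M.setConj X t ∈ Δ :=
  have hSgrp := hobj.1 S hS
  have hXS := hsub X hX
  setConj_mem_of_conj_Pi_pair hobj hS hX (setConjDef_of_subset hSgrp hXS ht)
    (setConj_subset hSgrp hXS ht)
    fun _ hp _ hq => conj_Pi_pair_of_isSubgroup hSgrp (hXS hp) (hXS hq) ht

lemma mem_of_subset_of_isSubgroup (hobj : M.Objective Δ) (hS : S ∈ Δ) {X Z : Set L}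
    (hX : X ∈ Δ) (hXZ : X ⊆ Z) (hZS : Z ⊆ S) (hZ : M.IsSubgroup Z) : Z ∈ Δ := by
  have := hobj.2.2 X hX S hS M.one (fun x _ => M.conj_one_mem x)
  rw [setConj_one] at this
  exact this (hobj.1 X hX) (hXZ.trans hZS) Z hZ hXZ hZS

lemma viaChain_of_forall_mem (hobj : M.Objective Δ) (hS : S ∈ Δ) (hsub : ∀ X ∈ Δ, X ⊆ S)
    {u : List L} (hu : ∀ s ∈ u, s ∈ S) {X : Set L} (hX : X ∈ Δ) : M.viaChain Δ u X := by
  induction u generalizing X with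
  | nil => exact hX
  | cons s u ih =>
    have hs : s ∈ S := hu s (by simp)
    exact ⟨hX, setConjDef_of_subset (hobj.1 S hS) (hsub X hX) hs,
      ih (fun t ht => hu t (by simp [ht])) (setConj_mem_of_mem hobj hS hsub hX hs)⟩

lemma viaChain_append (hobj : M.Objective Δ) (hS : S ∈ Δ) (hsub : ∀ X ∈ Δ, X ⊆ S)
    {u v : List L} {X : Set L} (hv : M.viaChain Δ v X) (hu : ∀ s ∈ u, s ∈ S) :
    M.viaChain Δ (v ++ u) X := by
  induction v generalizing X with
  | nil => exact viaChain_of_forall_mem hobj hS hsub hu hv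
  | cons g v ih => exact ⟨hv.1, hv.2.1, ih hv.2.2⟩

lemma append_mem_of_forall_mem (hobj : M.Objective Δ) (hS : S ∈ Δ) (hsub : ∀ X ∈ Δ, X ⊆ S)
    {u v : List L} (hv : v ∈ M.D) (hu : ∀ s ∈ u, s ∈ S) : v ++ u ∈ M.D := by
  obtain ⟨X, hX⟩ := (mem_D_iff hobj).1 hv
  exact (mem_D_iff hobj).2 ⟨X, viaChain_append hobj hS hsub hX hu⟩

lemma append_append_mem_of_forall_mem (hobj : M.Objective Δ) (hS : S ∈ Δ) (hsub : ∀ X ∈ Δ, X ⊆ S)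
    {u v w : List L} (hv : v ∈ M.D) (hu : ∀ s ∈ u, s ∈ S) (hw : ∀ s ∈ w, s ∈ S) :
    u ++ v ++ w ∈ M.D := by
  have huinv : ∀ s ∈ M.wordInv u, s ∈ S := by
    intro s hs
    simp only [wordInv, List.mem_map, List.mem_reverse] at hs
    obtain ⟨t, ht, rfl⟩ := hs
    exact (hobj.1 S hS).inv_mem (hu t ht)
  have huv : M.wordInv (u ++ v) ∈ M.D := by
    rw [wordInv_append]
    exact append_mem_of_forall_mem hobj hS hsub (wordInv_mem hv) huinv
  exact append_mem_of_forall_mem hobj hS hsub (by simpa using wordInv_mem huv) hw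

lemma conj_word_mem_and_Pi_eq (hobj : M.Objective Δ) (hS : S ∈ Δ) (hsub : ∀ X ∈ Δ, X ⊆ S)
    {g x y : L} (hx : x ∈ M.Sg S g) (hy : y ∈ M.Sg S g) :
    [x, y, g, M.inv (M.conj y g), M.inv (M.conj x g)] ∈ M.D ∧
      M.Pi [x, y, g, M.inv (M.conj y g), M.inv (M.conj x g)] = g := by
  obtain ⟨hxS, hxD, haS⟩ := hx
  obtain ⟨hyS, hyD, hbS⟩ := hy
  set a := M.conj x g
  set b := M.conj y g
  have hSgrp := hobj.1 S hS
  have hV : [x] ++ [y, g] ++ [M.inv b, M.inv a] ∈ M.D :=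
    append_append_mem_of_forall_mem hobj hS hsub (M.mem_append_right [M.inv g] _ hyD)
      (by simp [hxS]) (by simp [hSgrp.inv_mem haS, hSgrp.inv_mem hbS])
  have hW : [] ++ [x, g] ++ [b, M.inv b, M.inv a] ∈ M.D :=
    append_append_mem_of_forall_mem hobj hS hsub (M.mem_append_right [M.inv g] _ hxD) (by simp)
      (by simp [hbS, hSgrp.inv_mem haS, hSgrp.inv_mem hbS])
  have hW' : [] ++ [g, a] ++ [b, M.inv b, M.inv a] ∈ M.D :=
    append_append_mem_of_forall_mem hobj hS hsub (pair_conj_mem hxD) (by simp)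
      (by simp [hbS, hSgrp.inv_mem haS, hSgrp.inv_mem hbS])
  refine ⟨hV, ?_⟩
  calc M.Pi ([x] ++ [y, g] ++ [M.inv b, M.inv a])
        = M.Pi ([x] ++ [g, b] ++ [M.inv b, M.inv a]) := Pi_append_congr hV hW (Pi_pair_conj hyD)
    _ = M.Pi ([] ++ [g, a] ++ [b, M.inv b, M.inv a]) := Pi_append_congr hW hW' (Pi_pair_conj hxD)
    _ = M.Pi ([g] ++ [] ++ []) :=
        Pi_append_congr (u := [g]) (v := [a, b, M.inv b, M.inv a]) (v' := []) (w := []) hW'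
          (M.mem_single g)
          (Pi_append_wordInv (w := [a, b]) (hSgrp.2 _ (by simp [haS, hbS])))
    _ = g := M.Pi_single g

lemma conj_Pi_pair_of_mem_Sg (hobj : M.Objective Δ) (hS : S ∈ Δ) (hsub : ∀ X ∈ Δ, X ⊆ S)
    {g x y : L} (hx : x ∈ M.Sg S g) (hy : y ∈ M.Sg S g) :
    [M.inv g, M.Pi [x, y], g] ∈ M.D ∧ M.conj (M.Pi [x, y]) g = M.Pi [M.conj x g, M.conj y g] :=
  have ⟨hV, hPi⟩ := conj_word_mem_and_Pi_eq hobj hS hsub hx hy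
  conj_Pi_pair_of_Pi_eq hV hPi

lemma Sw_subset : ∀ w : List L, M.Sw S w ⊆ S
  | [] => subset_rfl
  | _ :: _ => fun _ hx => hx.1

lemma Sw_cons_subset_Sg {g : L} {w : List L} : M.Sw S (g :: w) ⊆ M.Sg S g :=
  fun _ ⟨hxS, hxD, hxw⟩ => ⟨hxS, hxD, Sw_subset w hxw⟩

lemma isSubgroup_Sw (hobj : M.Objective Δ) (hS : S ∈ Δ) (hsub : ∀ X ∈ Δ, X ⊆ S)
    (w : List L) : M.IsSubgroup (M.Sw S w) := by
  have hSgrp := hobj.1 S hS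
  induction w with
  | nil => exact hSgrp
  | cons g w ih =>
    refine hSgrp.of_subset (Sw_subset _)
      ⟨hSgrp.one_mem, M.one_conj_mem g, (M.one_conj g).symm ▸ ih.one_mem⟩ ?_ ?_
    · rintro x ⟨hxS, hxD, hxw⟩
      exact ⟨hSgrp.inv_mem hxS, conj_inv_mem hxD, (conj_inv hxD).symm ▸ ih.inv_mem hxw⟩
    · intro x hx y hy
      obtain ⟨hD, hval⟩ := conj_Pi_pair_of_mem_Sg hobj hS hsub (Sw_cons_subset_Sg hx)
        (Sw_cons_subset_Sg hy)
      exact ⟨hSgrp.Pi_mem (by simp [hx.1, hy.1]), hD,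
        hval ▸ ih.Pi_mem (by simp [hx.2.2, hy.2.2])⟩

lemma subset_Sw_of_viaChain (hsub : ∀ X ∈ Δ, X ⊆ S) {w : List L} {X : Set L}
    (hX : M.viaChain Δ w X) : X ⊆ M.Sw S w := by
  induction w generalizing X with
  | nil => exact hsub X hX
  | cons g w ih => exact fun x hx => ⟨hsub X hX.1 hx, hX.2.1 x hx, ih hX.2.2 ⟨x, hx, rfl⟩⟩

lemma viaChain_of_subset_Sw (hobj : M.Objective Δ) (hS : S ∈ Δ) (hsub : ∀ X ∈ Δ, X ⊆ S)
    {w : List L} {Q : Set L} (hQ : Q ∈ Δ) (hQw : Q ⊆ M.Sw S w) : M.viaChain Δ w Q := by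
  induction w generalizing Q with
  | nil => exact hQ
  | cons g w ih =>
    have hdef : M.setConjDef Q g := fun q hq => (hQw hq).2.1
    have himw : M.setConj Q g ⊆ M.Sw S w := by
      rintro _ ⟨q, hq, rfl⟩
      exact (hQw hq).2.2
    refine ⟨hQ, hdef, ih ?_ himw⟩
    exact setConj_mem_of_conj_Pi_pair hobj hS hQ hdef (himw.trans (Sw_subset w))
      fun p hp q hq => (conj_Pi_pair_of_mem_Sg hobj hS hsub (Sw_cons_subset_Sg (hQw hp))
        (Sw_cons_subset_Sg (hQw hq))).2

end Objective

end PartialGroupOn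

theorem Sw_subgroup_and_mem_iff (M : PartialGroupOn L) (Δ : Set (Set L))
    (S : Set L) (hobj : M.Objective Δ) (hS : S ∈ Δ) (hsub : ∀ X ∈ Δ, X ⊆ S)
    (w : List L) :
    M.IsSubgroup (M.Sw S w) ∧ M.Sw S w ⊆ S ∧ (M.Sw S w ∈ Δ ↔ w ∈ M.D) := by
  have hSw := isSubgroup_Sw hobj hS hsub w
  refine ⟨hSw, Sw_subset w, fun hΔ => ?_, fun hw => ?_⟩
  · exact (mem_D_iff hobj).2 ⟨_, viaChain_of_subset_Sw hobj hS hsub hΔ subset_rfl⟩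
  · obtain ⟨X, hX⟩ := (mem_D_iff hobj).1 hw
    exact mem_of_subset_of_isSubgroup hobj hS (mem_of_viaChain hX) (subset_Sw_of_viaChain hsub hX)
      (Sw_subset w) hSw
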